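/- Let p and q be odd integers with 5 ≤ p ≤ q, and let H⁺(p,q) be the presented group on generators a,b,α,β with relators α^{-1}a^{(p-1)/2}, β^{-1}b^{(q-1)/2}, βαbαβ(aβ)^2(αb)^2, and αβaβα(aβ)^2(αb)^2. Then there is a surjective group homomorphism from H⁺(p,q) onto Coxeter's group G^{3,p,q}. -/
import Mathlib

/-- The relators of the group `H⁺(p,q)` on generators
`a = of 0`, `b = of 1`, `α = of 2`, `β = of 3`. -/
def HplusRels (p q : ℤ) : Set (FreeGroup (Fin 4)) :=
  let a : FreeGroup (Fin 4) := FreeGroup.of 0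
  let b : FreeGroup (Fin 4) := FreeGroup.of 1
  let al : FreeGroup (Fin 4) := FreeGroup.of 2
  let be : FreeGroup (Fin 4) := FreeGroup.of 3
  { al⁻¹ * a ^ ((p - 1) / 2), be⁻¹ * b ^ ((q - 1) / 2),
    be * al * b * al * be * (a * be) ^ 2 * (al * b) ^ 2,
    al * be * a * be * al * (a * be) ^ 2 * (al * b) ^ 2 }

/-- The relators of Coxeter's group `G^{m,p,q}` on generators
`A = of 0`, `B = of 1`, `C = of 2`. -/
def coxeterGRels (m p q : ℤ) : Set (FreeGroup (Fin 3)) :=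
  let A : FreeGroup (Fin 3) := FreeGroup.of 0
  let B : FreeGroup (Fin 3) := FreeGroup.of 1
  let C : FreeGroup (Fin 3) := FreeGroup.of 2
  { A ^ p, B ^ q, C ^ m, (A * B) ^ 2, (B * C) ^ 2, (C * A) ^ 2, (A * B * C) ^ 2 }

set_option maxHeartbeats 1000000

section Key

variable {G : Type*} [Group G]

private lemma key1 (A B C : G) (hC : C ^ 3 = 1) (hAB : (A * B) ^ 2 = 1) (hBC : (B * C) ^ 2 = 1)
    (hCA : (C * A) ^ 2 = 1) (hABC : (A * B * C) ^ 2 = 1) :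
    B * A⁻¹ * B⁻¹ * B⁻¹ * A⁻¹ * B * A * A * B * A * A * B * A⁻¹ * B⁻¹ * B⁻¹ * A⁻¹ * B⁻¹ * B⁻¹ = 1 := by
  have hC2 : C * C * C = 1 := by
    have h := hC; rw [pow_succ, pow_two] at h; exact h
  have hAB2 : A * B * (A * B) = 1 := by rw [← pow_two]; exact hAB
  have hBC2 : B * C * (B * C) = 1 := by rw [← pow_two]; exact hBC
  have hCA2 : C * A * (C * A) = 1 := by rw [← pow_two]; exact hCA
  have hABC2 : A * B * C * (A * B * C) = 1 := by rw [← pow_two]; exact hABC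
  calc B * A⁻¹ * B⁻¹ * B⁻¹ * A⁻¹ * B * A * A * B * A * A * B * A⁻¹ * B⁻¹ * B⁻¹ * A⁻¹ * B⁻¹ * B⁻¹
    _ = ((B * A⁻¹ * B⁻¹ * B⁻¹ * A⁻¹ * B * A * A * B * A * A * B * A⁻¹ * B⁻¹) * ((A * B * (A * B))⁻¹) * (B * A⁻¹ * B⁻¹ * B⁻¹ * A⁻¹ * B * A * A * B * A * A * B * A⁻¹ * B⁻¹)⁻¹) * (B * A⁻¹ * B⁻¹ * B⁻¹ * A⁻¹ * B * A * A * B * A * A * B * A⁻¹ * B⁻¹ * A * B⁻¹) := by group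
    _ = (B * A⁻¹ * B⁻¹ * B⁻¹ * A⁻¹ * B * A * A * B * A * A * B * A⁻¹ * B⁻¹ * A * B⁻¹) := by rw [hAB2]; simp only [inv_one, mul_one, mul_inv_cancel, one_mul]
    _ = ((B * A⁻¹ * B⁻¹ * B⁻¹ * A⁻¹ * B * A) * (A * B * (A * B)) * (B * A⁻¹ * B⁻¹ * B⁻¹ * A⁻¹ * B * A)⁻¹) * (B * A⁻¹ * B⁻¹ * B⁻¹ * A⁻¹ * B * A * B⁻¹ * A * B * A⁻¹ * B⁻¹ * A * B⁻¹) := by group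
    _ = (B * A⁻¹ * B⁻¹ * B⁻¹ * A⁻¹ * B * A * B⁻¹ * A * B * A⁻¹ * B⁻¹ * A * B⁻¹) := by rw [hAB2]; simp only [inv_one, mul_one, mul_inv_cancel, one_mul]
    _ = ((B * A⁻¹) * ((A * B * (A * B))⁻¹) * (B * A⁻¹)⁻¹) * (B * B * A * B⁻¹ * A⁻¹ * B * A * B⁻¹ * A * B * A⁻¹ * B⁻¹ * A * B⁻¹) := by group
    _ = (B * B * A * B⁻¹ * A⁻¹ * B * A * B⁻¹ * A * B * A⁻¹ * B⁻¹ * A * B⁻¹) := by rw [hAB2]; simp only [inv_one, mul_one, mul_inv_cancel, one_mul]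
    _ = ((B * B * A) * ((A * B * (A * B))⁻¹) * (B * B * A)⁻¹) * (B * B * A * A * B * B * A * B⁻¹ * A * B * A⁻¹ * B⁻¹ * A * B⁻¹) := by group
    _ = (B * B * A * A * B * B * A * B⁻¹ * A * B * A⁻¹ * B⁻¹ * A * B⁻¹) := by rw [hAB2]; simp only [inv_one, mul_one, mul_inv_cancel, one_mul]
    _ = ((B * B * A * A * B * B * A * B⁻¹ * A * B * A⁻¹) * ((A * B * (A * B))⁻¹) * (B * B * A * A * B * B * A * B⁻¹ * A * B * A⁻¹)⁻¹) * (B * B * A * A * B * B * A * B⁻¹ * A * B * B * A * A * B⁻¹) := by group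
    _ = (B * B * A * A * B * B * A * B⁻¹ * A * B * B * A * A * B⁻¹) := by rw [hAB2]; simp only [inv_one, mul_one, mul_inv_cancel, one_mul]
    _ = ((B * B * A * A * B * B * A * C) * ((B * C * (B * C))⁻¹) * (B * B * A * A * B * B * A * C)⁻¹) * (B * B * A * A * B * B * A * C * B * C * A * B * B * A * A * B⁻¹) := by group
    _ = (B * B * A * A * B * B * A * C * B * C * A * B * B * A * A * B⁻¹) := by rw [hBC2]; simp only [inv_one, mul_one, mul_inv_cancel, one_mul]
    _ = ((B * B * A * A * B * B * A * C * B * C) * (A * B * C * (A * B * C)) * (B * B * A * A * B * B * A * C * B * C)⁻¹) * (B * B * A * A * B * B * A * C * A⁻¹ * C⁻¹ * B * A * A * B⁻¹) := by group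
    _ = (B * B * A * A * B * B * A * C * A⁻¹ * C⁻¹ * B * A * A * B⁻¹) := by rw [hABC2]; simp only [inv_one, mul_one, mul_inv_cancel, one_mul]
    _ = ((B * B * A * A * B * B * A * C) * ((C * A * (C * A))⁻¹) * (B * B * A * A * B * B * A * C)⁻¹) * (B * B * A * A * B * B * A * C * C * A * B * A * A * B⁻¹) := by group
    _ = (B * B * A * A * B * B * A * C * C * A * B * A * A * B⁻¹) := by rw [hCA2]; simp only [inv_one, mul_one, mul_inv_cancel, one_mul]
    _ = ((B * B * A * A * B * B * A * C * C) * (A * B * (A * B)) * (B * B * A * A * B * B * A * C * C)⁻¹) * (B * B * A * A * B * B * A * C * C * B⁻¹ * A * B⁻¹) := by group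
    _ = (B * B * A * A * B * B * A * C * C * B⁻¹ * A * B⁻¹) := by rw [hAB2]; simp only [inv_one, mul_one, mul_inv_cancel, one_mul]
    _ = ((B * B * A * A * B * B * A) * (C * C * C) * (B * B * A * A * B * B * A)⁻¹) * (B * B * A * A * B * B * A * C⁻¹ * B⁻¹ * A * B⁻¹) := by group
    _ = (B * B * A * A * B * B * A * C⁻¹ * B⁻¹ * A * B⁻¹) := by rw [hC2]; simp only [inv_one, mul_one, mul_inv_cancel, one_mul]
    _ = ((B * B * A * A * B * B * A) * ((B * C * (B * C))⁻¹) * (B * B * A * A * B * B * A)⁻¹) * (B * B * A * A * B * B * A * B * C * A * B⁻¹) := by group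
    _ = (B * B * A * A * B * B * A * B * C * A * B⁻¹) := by rw [hBC2]; simp only [inv_one, mul_one, mul_inv_cancel, one_mul]
    _ = ((B * B * A * A * B * B) * (A * B * (A * B)) * (B * B * A * A * B * B)⁻¹) * (B * B * A * A * B * A⁻¹ * C * A * B⁻¹) := by group
    _ = (B * B * A * A * B * A⁻¹ * C * A * B⁻¹) := by rw [hAB2]; simp only [inv_one, mul_one, mul_inv_cancel, one_mul]
    _ = ((B * B * A * A * B * A⁻¹) * (C * A * (C * A)) * (B * B * A * A * B * A⁻¹)⁻¹) * (B * B * A * A * B * A⁻¹ * A⁻¹ * C⁻¹ * B⁻¹) := by group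
    _ = (B * B * A * A * B * A⁻¹ * A⁻¹ * C⁻¹ * B⁻¹) := by rw [hCA2]; simp only [inv_one, mul_one, mul_inv_cancel, one_mul]
    _ = ((B * B * A * A * B * A⁻¹ * A⁻¹) * ((A * B * C * (A * B * C))⁻¹) * (B * B * A * A * B * A⁻¹ * A⁻¹)⁻¹) * (B * B * A * A * B * A⁻¹ * B * C * A) := by group
    _ = (B * B * A * A * B * A⁻¹ * B * C * A) := by rw [hABC2]; simp only [inv_one, mul_one, mul_inv_cancel, one_mul]
    _ = ((B * B * A * A * B * A⁻¹) * (B * C * (B * C)) * (B * B * A * A * B * A⁻¹)⁻¹) * (B * B * A * A * B * A⁻¹ * C⁻¹ * B⁻¹ * A) := by group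
    _ = (B * B * A * A * B * A⁻¹ * C⁻¹ * B⁻¹ * A) := by rw [hBC2]; simp only [inv_one, mul_one, mul_inv_cancel, one_mul]
    _ = ((B * B * A * A * B) * ((C * A * (C * A))⁻¹) * (B * B * A * A * B)⁻¹) * (B * B * A * A * B * C * A * B⁻¹ * A) := by group
    _ = (B * B * A * A * B * C * A * B⁻¹ * A) := by rw [hCA2]; simp only [inv_one, mul_one, mul_inv_cancel, one_mul]
    _ = ((B * B * A) * (A * B * C * (A * B * C)) * (B * B * A)⁻¹) * (B * B * A * C⁻¹ * B⁻¹ * B⁻¹ * A) := by group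
    _ = (B * B * A * C⁻¹ * B⁻¹ * B⁻¹ * A) := by rw [hABC2]; simp only [inv_one, mul_one, mul_inv_cancel, one_mul]
    _ = ((B * B * A) * ((B * C * (B * C))⁻¹) * (B * B * A)⁻¹) * (B * B * A * B * C * B⁻¹ * A) := by group
    _ = (B * B * A * B * C * B⁻¹ * A) := by rw [hBC2]; simp only [inv_one, mul_one, mul_inv_cancel, one_mul]
    _ = ((B * B) * (A * B * (A * B)) * (B * B)⁻¹) * (B * A⁻¹ * C * B⁻¹ * A) := by group
    _ = (B * A⁻¹ * C * B⁻¹ * A) := by rw [hAB2]; simp only [inv_one, mul_one, mul_inv_cancel, one_mul]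
    _ = ((B * A⁻¹) * (C * C * C) * (B * A⁻¹)⁻¹) * (B * A⁻¹ * C⁻¹ * C⁻¹ * B⁻¹ * A) := by group
    _ = (B * A⁻¹ * C⁻¹ * C⁻¹ * B⁻¹ * A) := by rw [hC2]; simp only [inv_one, mul_one, mul_inv_cancel, one_mul]
    _ = ((B) * ((C * A * (C * A))⁻¹) * (B)⁻¹) * (B * C * A * C⁻¹ * B⁻¹ * A) := by group
    _ = (B * C * A * C⁻¹ * B⁻¹ * A) := by rw [hCA2]; simp only [inv_one, mul_one, mul_inv_cancel, one_mul]
    _ = ((B * C * A) * ((B * C * (B * C))⁻¹) * (B * C * A)⁻¹) * (B * C * A * B * C * A) := by group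
    _ = (B * C * A * B * C * A) := by rw [hBC2]; simp only [inv_one, mul_one, mul_inv_cancel, one_mul]
    _ = ((B * C) * (A * B * C * (A * B * C)) * (B * C)⁻¹) * ((1 : G)) := by group
    _ = ((1 : G)) := by rw [hABC2]; simp only [inv_one, mul_one, mul_inv_cancel, one_mul]

private lemma key2 (A B C : G) (hC : C ^ 3 = 1) (hAB : (A * B) ^ 2 = 1) (hBC : (B * C) ^ 2 = 1)
    (hCA : (C * A) ^ 2 = 1) (hABC : (A * B * C) ^ 2 = 1) :
    A⁻¹ * B * A * A * B * A * B * A * A * B * A⁻¹ * B⁻¹ * B⁻¹ * A⁻¹ * B⁻¹ * B⁻¹ = 1 := by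
  have hC2 : C * C * C = 1 := by
    have h := hC; rw [pow_succ, pow_two] at h; exact h
  have hAB2 : A * B * (A * B) = 1 := by rw [← pow_two]; exact hAB
  have hBC2 : B * C * (B * C) = 1 := by rw [← pow_two]; exact hBC
  have hCA2 : C * A * (C * A) = 1 := by rw [← pow_two]; exact hCA
  have hABC2 : A * B * C * (A * B * C) = 1 := by rw [← pow_two]; exact hABC
  calc A⁻¹ * B * A * A * B * A * B * A * A * B * A⁻¹ * B⁻¹ * B⁻¹ * A⁻¹ * B⁻¹ * B⁻¹
    _ = ((A⁻¹ * B * A) * (A * B * (A * B)) * (A⁻¹ * B * A)⁻¹) * (A⁻¹ * B * A * A * A * B * A⁻¹ * B⁻¹ * B⁻¹ * A⁻¹ * B⁻¹ * B⁻¹) := by group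
    _ = (A⁻¹ * B * A * A * A * B * A⁻¹ * B⁻¹ * B⁻¹ * A⁻¹ * B⁻¹ * B⁻¹) := by rw [hAB2]; simp only [inv_one, mul_one, mul_inv_cancel, one_mul]
    _ = ((A⁻¹ * B * A * A * A * B * A⁻¹ * B⁻¹) * ((A * B * (A * B))⁻¹) * (A⁻¹ * B * A * A * A * B * A⁻¹ * B⁻¹)⁻¹) * (A⁻¹ * B * A * A * A * B * A⁻¹ * B⁻¹ * A * B⁻¹) := by group
    _ = (A⁻¹ * B * A * A * A * B * A⁻¹ * B⁻¹ * A * B⁻¹) := by rw [hAB2]; simp only [inv_one, mul_one, mul_inv_cancel, one_mul]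
    _ = ((A⁻¹ * B * A * A * A * B) * ((C * A * (C * A))⁻¹) * (A⁻¹ * B * A * A * A * B)⁻¹) * (A⁻¹ * B * A * A * A * B * C * A * C * B⁻¹ * A * B⁻¹) := by group
    _ = (A⁻¹ * B * A * A * A * B * C * A * C * B⁻¹ * A * B⁻¹) := by rw [hCA2]; simp only [inv_one, mul_one, mul_inv_cancel, one_mul]
    _ = ((A⁻¹ * B * A * A) * (A * B * C * (A * B * C)) * (A⁻¹ * B * A * A)⁻¹) * (A⁻¹ * B * A * A * C⁻¹ * B⁻¹ * C * B⁻¹ * A * B⁻¹) := by group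
    _ = (A⁻¹ * B * A * A * C⁻¹ * B⁻¹ * C * B⁻¹ * A * B⁻¹) := by rw [hABC2]; simp only [inv_one, mul_one, mul_inv_cancel, one_mul]
    _ = ((A⁻¹ * B * A * A) * ((B * C * (B * C))⁻¹) * (A⁻¹ * B * A * A)⁻¹) * (A⁻¹ * B * A * A * B * C * C * B⁻¹ * A * B⁻¹) := by group
    _ = (A⁻¹ * B * A * A * B * C * C * B⁻¹ * A * B⁻¹) := by rw [hBC2]; simp only [inv_one, mul_one, mul_inv_cancel, one_mul]
    _ = ((A⁻¹ * B * A * A * B) * (C * C * C) * (A⁻¹ * B * A * A * B)⁻¹) * (A⁻¹ * B * A * A * B * C⁻¹ * B⁻¹ * A * B⁻¹) := by group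
    _ = (A⁻¹ * B * A * A * B * C⁻¹ * B⁻¹ * A * B⁻¹) := by rw [hC2]; simp only [inv_one, mul_one, mul_inv_cancel, one_mul]
    _ = ((A⁻¹ * B * A * A * B) * ((B * C * (B * C))⁻¹) * (A⁻¹ * B * A * A * B)⁻¹) * (A⁻¹ * B * A * A * B * B * C * A * B⁻¹) := by group
    _ = (A⁻¹ * B * A * A * B * B * C * A * B⁻¹) := by rw [hBC2]; simp only [inv_one, mul_one, mul_inv_cancel, one_mul]
    _ = ((A⁻¹ * B * A * A * B * B * C) * (A * B * C * (A * B * C)) * (A⁻¹ * B * A * A * B * B * C)⁻¹) * (A⁻¹ * B * A * A * B * A⁻¹ * C⁻¹ * B⁻¹ * B⁻¹) := by group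
    _ = (A⁻¹ * B * A * A * B * A⁻¹ * C⁻¹ * B⁻¹ * B⁻¹) := by rw [hABC2]; simp only [inv_one, mul_one, mul_inv_cancel, one_mul]
    _ = ((A⁻¹ * B * A * A * B) * ((C * A * (C * A))⁻¹) * (A⁻¹ * B * A * A * B)⁻¹) * (A⁻¹ * B * A * A * B * C * A * B⁻¹ * B⁻¹) := by group
    _ = (A⁻¹ * B * A * A * B * C * A * B⁻¹ * B⁻¹) := by rw [hCA2]; simp only [inv_one, mul_one, mul_inv_cancel, one_mul]
    _ = ((A⁻¹ * B * A) * (A * B * C * (A * B * C)) * (A⁻¹ * B * A)⁻¹) * (A⁻¹ * B * A * C⁻¹ * B⁻¹ * B⁻¹ * B⁻¹) := by group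
    _ = (A⁻¹ * B * A * C⁻¹ * B⁻¹ * B⁻¹ * B⁻¹) := by rw [hABC2]; simp only [inv_one, mul_one, mul_inv_cancel, one_mul]
    _ = ((A⁻¹ * B * A) * ((B * C * (B * C))⁻¹) * (A⁻¹ * B * A)⁻¹) * (A⁻¹ * B * A * B * C * B⁻¹ * B⁻¹) := by group
    _ = (A⁻¹ * B * A * B * C * B⁻¹ * B⁻¹) := by rw [hBC2]; simp only [inv_one, mul_one, mul_inv_cancel, one_mul]
    _ = ((A⁻¹ * B) * (A * B * (A * B)) * (A⁻¹ * B)⁻¹) * (A⁻¹ * A⁻¹ * C * B⁻¹ * B⁻¹) := by group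
    _ = (A⁻¹ * A⁻¹ * C * B⁻¹ * B⁻¹) := by rw [hAB2]; simp only [inv_one, mul_one, mul_inv_cancel, one_mul]
    _ = ((A⁻¹ * A⁻¹) * (C * C * C) * (A⁻¹ * A⁻¹)⁻¹) * (A⁻¹ * A⁻¹ * C⁻¹ * C⁻¹ * B⁻¹ * B⁻¹) := by group
    _ = (A⁻¹ * A⁻¹ * C⁻¹ * C⁻¹ * B⁻¹ * B⁻¹) := by rw [hC2]; simp only [inv_one, mul_one, mul_inv_cancel, one_mul]
    _ = ((A⁻¹) * ((C * A * (C * A))⁻¹) * (A⁻¹)⁻¹) * (A⁻¹ * C * A * C⁻¹ * B⁻¹ * B⁻¹) := by group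
    _ = (A⁻¹ * C * A * C⁻¹ * B⁻¹ * B⁻¹) := by rw [hCA2]; simp only [inv_one, mul_one, mul_inv_cancel, one_mul]
    _ = ((A⁻¹ * C * A) * ((B * C * (B * C))⁻¹) * (A⁻¹ * C * A)⁻¹) * (A⁻¹ * C * A * B * C * B⁻¹) := by group
    _ = (A⁻¹ * C * A * B * C * B⁻¹) := by rw [hBC2]; simp only [inv_one, mul_one, mul_inv_cancel, one_mul]
    _ = ((A⁻¹ * C) * (A * B * C * (A * B * C)) * (A⁻¹ * C)⁻¹) * (A⁻¹ * B⁻¹ * A⁻¹ * B⁻¹) := by group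
    _ = (A⁻¹ * B⁻¹ * A⁻¹ * B⁻¹) := by rw [hABC2]; simp only [inv_one, mul_one, mul_inv_cancel, one_mul]
    _ = ((A⁻¹) * ((A * B * (A * B))⁻¹) * (A⁻¹)⁻¹) * ((1 : G)) := by group
    _ = ((1 : G)) := by rw [hAB2]; simp only [inv_one, mul_one, mul_inv_cancel, one_mul]

private lemma keyC (A B C : G) (hC : C ^ 3 = 1) (hAB : (A * B) ^ 2 = 1) (hBC : (B * C) ^ 2 = 1)
    (hCA : (C * A) ^ 2 = 1) (hABC : (A * B * C) ^ 2 = 1) :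
    C = A * B⁻¹ * A⁻¹ * B := by
  have hC2 : C * C * C = 1 := by
    have h := hC; rw [pow_succ, pow_two] at h; exact h
  have hAB2 : A * B * (A * B) = 1 := by rw [← pow_two]; exact hAB
  have hBC2 : B * C * (B * C) = 1 := by rw [← pow_two]; exact hBC
  have hCA2 : C * A * (C * A) = 1 := by rw [← pow_two]; exact hCA
  have hABC2 : A * B * C * (A * B * C) = 1 := by rw [← pow_two]; exact hABC
  have h : C⁻¹ * A * B⁻¹ * A⁻¹ * B = 1 := by
    calc C⁻¹ * A * B⁻¹ * A⁻¹ * B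
      _ = (((C * C * C)⁻¹)) * (C * C * A * B⁻¹ * A⁻¹ * B) := by group
      _ = (C * C * A * B⁻¹ * A⁻¹ * B) := by rw [hC2]; simp only [inv_one, mul_one, mul_inv_cancel, one_mul]
      _ = ((C) * (C * A * (C * A)) * (C)⁻¹) * (C * A⁻¹ * C⁻¹ * B⁻¹ * A⁻¹ * B) := by group
      _ = (C * A⁻¹ * C⁻¹ * B⁻¹ * A⁻¹ * B) := by rw [hCA2]; simp only [inv_one, mul_one, mul_inv_cancel, one_mul]
      _ = ((C * A⁻¹) * ((A * B * C * (A * B * C))⁻¹) * (C * A⁻¹)⁻¹) * (C * B * C * B) := by group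
      _ = (C * B * C * B) := by rw [hABC2]; simp only [inv_one, mul_one, mul_inv_cancel, one_mul]
      _ = ((C) * (B * C * (B * C)) * (C)⁻¹) * ((1 : G)) := by group
      _ = ((1 : G)) := by rw [hBC2]; simp only [inv_one, mul_one, mul_inv_cancel, one_mul]
  calc C = C * (C⁻¹ * A * B⁻¹ * A⁻¹ * B) := by rw [h, mul_one]
    _ = A * B⁻¹ * A⁻¹ * B := by simp only [← mul_assoc, mul_inv_cancel, one_mul]

end Key

/-- For `p,q` odd with `5 ≤ p ≤ q`, `H⁺(p,q)` surjects onto Coxeter's group `G^{3,p,q}`. -/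
theorem Hplus_surjects_onto_G3pq (p q : ℤ) (hp : Odd p) (hq : Odd q)
    (hp5 : 5 ≤ p) (hpq : p ≤ q) :
    ∃ f : PresentedGroup (HplusRels p q) →* PresentedGroup (coxeterGRels 3 p q),
      Function.Surjective f := by
  obtain ⟨m, hm⟩ := hp
  obtain ⟨n, hn⟩ := hq
  set T := PresentedGroup (coxeterGRels 3 p q) with hT
  set A : T := PresentedGroup.of 0 with hAdef
  set B : T := PresentedGroup.of 1 with hBdef
  set C : T := PresentedGroup.of 2 with hCdef
  have hmk : ∀ w ∈ coxeterGRels 3 p q, PresentedGroup.mk (coxeterGRels 3 p q) w = 1 :=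
    fun w hw => (QuotientGroup.eq_one_iff w).mpr (Subgroup.subset_normalClosure hw)
  have hofA : A = PresentedGroup.mk (coxeterGRels 3 p q) (FreeGroup.of 0) := rfl
  have hofB : B = PresentedGroup.mk (coxeterGRels 3 p q) (FreeGroup.of 1) := rfl
  have hofC : C = PresentedGroup.mk (coxeterGRels 3 p q) (FreeGroup.of 2) := rfl
  have hA : A ^ (p : ℤ) = 1 := by
    rw [hofA, ← map_zpow]
    exact hmk _ (by simp [coxeterGRels])
  have hB : B ^ (q : ℤ) = 1 := by
    rw [hofB, ← map_zpow]
    exact hmk _ (by simp [coxeterGRels])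
  have hC : C ^ (3 : ℕ) = 1 := by
    have h3 : C ^ (3 : ℤ) = 1 := by
      rw [hofC, ← map_zpow]
      exact hmk _ (by simp [coxeterGRels])
    simpa using h3
  have hAB : (A * B) ^ 2 = 1 := by
    rw [hofA, hofB, ← map_mul, ← map_pow]
    exact hmk _ (by simp [coxeterGRels])
  have hBC : (B * C) ^ 2 = 1 := by
    rw [hofB, hofC, ← map_mul, ← map_pow]
    exact hmk _ (by simp [coxeterGRels])
  have hCA : (C * A) ^ 2 = 1 := by
    rw [hofC, hofA, ← map_mul, ← map_pow]
    exact hmk _ (by simp [coxeterGRels])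
  have hABC : (A * B * C) ^ 2 = 1 := by
    rw [hofA, hofB, hofC, ← map_mul, ← map_mul, ← map_pow]
    exact hmk _ (by simp [coxeterGRels])
  -- the map on generators : a ↦ A², b ↦ B⁻², α ↦ A⁻¹, β ↦ B
  set g : Fin 4 → T := ![A ^ 2, (B⁻¹) ^ 2, A⁻¹, B] with hg
  have hg0 : g 0 = A ^ 2 := rfl
  have hg1 : g 1 = (B⁻¹) ^ 2 := rfl
  have hg2 : g 2 = A⁻¹ := rfl
  have hg3 : g 3 = B := rfl
  have hcond : ∀ r ∈ HplusRels p q, FreeGroup.lift g r = 1 := by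
    intro r hr
    simp only [HplusRels, Set.mem_insert_iff, Set.mem_singleton_iff] at hr
    rcases hr with rfl | rfl | rfl | rfl
    · simp only [map_mul, map_inv, map_zpow, FreeGroup.lift_apply_of, hg0, hg2]
      have hk : (p - 1) / 2 = m := by omega
      rw [hk]
      calc (A⁻¹)⁻¹ * (A ^ 2) ^ (m : ℤ) = A ^ (2 * m + 1 : ℤ) := by group
        _ = A ^ (p : ℤ) := by rw [← hm]
        _ = 1 := hA
    · simp only [map_mul, map_inv, map_zpow, FreeGroup.lift_apply_of, hg1, hg3]
      have hk : (q - 1) / 2 = n := by omega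
      rw [hk]
      calc B⁻¹ * ((B⁻¹) ^ 2) ^ (n : ℤ) = (B ^ (2 * n + 1 : ℤ))⁻¹ := by group
        _ = (B ^ (q : ℤ))⁻¹ := by rw [← hn]
        _ = 1 := by rw [hB, inv_one]
    · simp only [map_mul, map_pow, FreeGroup.lift_apply_of, hg0, hg1, hg2, hg3]
      calc B * A⁻¹ * (B⁻¹) ^ 2 * A⁻¹ * B * (A ^ 2 * B) ^ 2 * (A⁻¹ * (B⁻¹) ^ 2) ^ 2
          = B * A⁻¹ * B⁻¹ * B⁻¹ * A⁻¹ * B * A * A * B * A * A * B * A⁻¹ * B⁻¹ * B⁻¹ * A⁻¹ * B⁻¹ * B⁻¹ := by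
            simp only [pow_two]; group
        _ = 1 := key1 A B C hC hAB hBC hCA hABC
    · simp only [map_mul, map_pow, FreeGroup.lift_apply_of, hg0, hg1, hg2, hg3]
      calc A⁻¹ * B * A ^ 2 * B * A⁻¹ * (A ^ 2 * B) ^ 2 * (A⁻¹ * (B⁻¹) ^ 2) ^ 2
          = A⁻¹ * B * A * A * B * A * B * A * A * B * A⁻¹ * B⁻¹ * B⁻¹ * A⁻¹ * B⁻¹ * B⁻¹ := by
            simp only [pow_two]; group
        _ = 1 := key2 A B C hC hAB hBC hCA hABC
  refine ⟨PresentedGroup.toGroup hcond, ?_⟩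
  rw [← MonoidHom.range_eq_top, eq_top_iff, ← PresentedGroup.closure_range_of (coxeterGRels 3 p q),
    Subgroup.closure_le]
  rintro _ ⟨i, rfl⟩
  have hArange : A ∈ (PresentedGroup.toGroup hcond).range := by
    refine ⟨(PresentedGroup.of 0 : PresentedGroup (HplusRels p q)) ^ (m + 1 : ℤ), ?_⟩
    rw [map_zpow, PresentedGroup.toGroup.of, hg0]
    calc (A ^ 2) ^ (m + 1 : ℤ) = A ^ (2 * m + 1 : ℤ) * A := by group
      _ = A ^ (p : ℤ) * A := by rw [← hm]
      _ = A := by rw [hA, one_mul]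
  have hBrange : B ∈ (PresentedGroup.toGroup hcond).range := by
    refine ⟨PresentedGroup.of 3, ?_⟩
    rw [PresentedGroup.toGroup.of, hg3]
  have hCrange : C ∈ (PresentedGroup.toGroup hcond).range := by
    rw [keyC A B C hC hAB hBC hCA hABC]
    exact mul_mem (mul_mem (mul_mem hArange (inv_mem hBrange)) (inv_mem hArange)) hBrange
  fin_cases i
  · exact hArange
  · exact hBrange
  · exact hCrange
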